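/- Let C be a semidualizing (S,R)-bimodule. The functors C ⊗_R − and Hom_S(C,−) restrict to quasi-inverse equivalences between the Auslander class A_C(R) and the Bass class B_C(S), with natural isomorphisms given by the unit μ and counit ν of the adjunction. -/

import Mathlib

open CategoryTheory MulOpposite

noncomputable section

universe u v w

section BTen

variable (S : Type w) [Ring S] (R : Type u) [Ring R]
variable (C : Type v) [AddCommGroup C] [Module S C] [Module Rᵐᵒᵖ C] [SMulCommClass S Rᵐᵒᵖ C]
variable (M : Type u) [AddCommGroup M] [Module R M]

/-- The defining relations of the balanced tensor product `C ⊗_R M`. -/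
def brel : Submodule S (TensorProduct ℤ C M) :=
  Submodule.span S {x | ∃ (c : C) (r : R) (m : M),
    x = (op r • c) ⊗ₜ[ℤ] m - c ⊗ₜ[ℤ] (r • m)}

/-- The balanced tensor product `C ⊗_R M` of a right `R`-module (with compatible
left `S`-action) and a left `R`-module, as a left `S`-module. -/
abbrev BTen := (TensorProduct ℤ C M) ⧸ brel S R C M

/-- `c ⊗ m` in `C ⊗_R M`. -/
def btmul (c : C) (m : M) : BTen S R C M := Submodule.Quotient.mk (c ⊗ₜ[ℤ] m)

end BTen

section BMap

variable (S : Type w) [Ring S] (R : Type u) [Ring R]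
variable (C : Type v) [AddCommGroup C] [Module S C] [Module Rᵐᵒᵖ C] [SMulCommClass S Rᵐᵒᵖ C]
variable {M M' M'' : Type u} [AddCommGroup M] [Module R M] [AddCommGroup M'] [Module R M']
  [AddCommGroup M''] [Module R M'']

/-- The `S`-linear lift of `1 ⊗ f` on the ambient `ℤ`-tensor products. -/
def bpre (f : M →ₗ[R] M') : TensorProduct ℤ C M →ₗ[S] TensorProduct ℤ C M' where
  toFun := LinearMap.lTensor C f.toAddMonoidHom.toIntLinearMap
  map_add' x y := map_add _ x y
  map_smul' s x := by
    induction x using TensorProduct.induction_on with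
    | zero => simp
    | tmul c m => simp [TensorProduct.smul_tmul']
    | add x y hx hy => simp_all [smul_add]

/-- The `S`-linear map `C ⊗_R M → C ⊗_R M'` induced by an `R`-linear map `f : M → M'`. -/
def bmap (f : M →ₗ[R] M') : BTen S R C M →ₗ[S] BTen S R C M' :=
  Submodule.mapQ _ _ (bpre S R C f) (by
    rw [brel, Submodule.span_le]
    rintro x ⟨c, r, m, rfl⟩
    simp only [SetLike.mem_coe, Submodule.mem_comap, map_sub]
    have h1 : bpre S R C f ((op r • c) ⊗ₜ[ℤ] m) = (op r • c) ⊗ₜ[ℤ] (f m) := by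
      simp [bpre]
    have h2 : bpre S R C f (c ⊗ₜ[ℤ] (r • m)) = c ⊗ₜ[ℤ] (r • f m) := by
      simp [bpre]
    rw [h1, h2]
    exact Submodule.subset_span ⟨c, r, f m, rfl⟩)

end BMap

set_option linter.unusedSectionVars false

section Lemmas

variable (S : Type w) [Ring S] (R : Type u) [Ring R]
variable (C : Type v) [AddCommGroup C] [Module S C] [Module Rᵐᵒᵖ C] [SMulCommClass S Rᵐᵒᵖ C]
variable {M M' M'' : Type u} [AddCommGroup M] [Module R M] [AddCommGroup M'] [Module R M']
  [AddCommGroup M''] [Module R M'']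

@[simp] lemma bmap_btmul (f : M →ₗ[R] M') (c : C) (m : M) :
    bmap S R C f (btmul S R C M c m) = btmul S R C M' c (f m) := by
  simp [bmap, btmul, bpre, Submodule.mapQ_apply]

lemma btmul_add (c : C) (m m' : M) :
    btmul S R C M c (m + m') = btmul S R C M c m + btmul S R C M c m' := by
  simp [btmul, TensorProduct.tmul_add, Submodule.Quotient.mk_add]

lemma btmul_smul (s : S) (c : C) (m : M) :
    btmul S R C M (s • c) m = s • btmul S R C M c m := by
  rw [btmul, btmul, ← Submodule.Quotient.mk_smul, TensorProduct.smul_tmul']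

lemma btmul_rel (r : R) (c : C) (m : M) :
    btmul S R C M (op r • c) m = btmul S R C M c (r • m) := by
  rw [btmul, btmul, Submodule.Quotient.eq]
  exact Submodule.subset_span ⟨c, r, m, rfl⟩

variable {T : Type u} [AddCommGroup T] [Module S T]

lemma bten_ext {g h : BTen S R C M →ₗ[S] T}
    (H : ∀ (c : C) (m : M), g (btmul S R C M c m) = h (btmul S R C M c m)) : g = h := by
  refine LinearMap.ext fun x => ?_
  obtain ⟨y, rfl⟩ := Submodule.Quotient.mk_surjective _ x
  induction y using TensorProduct.induction_on with
  | zero => simp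
  | tmul c m => exact H c m
  | add a b ha hb =>
      rw [Submodule.Quotient.mk_add, map_add, map_add, ha, hb]

end Lemmas

section TenF

variable (S : Type u) [Ring S] (R : Type u) [Ring R]
variable (C : Type u) [AddCommGroup C] [Module S C] [Module Rᵐᵒᵖ C] [SMulCommClass S Rᵐᵒᵖ C]

/-- The functor `C ⊗_R - : Mod(R) ⥤ Mod(S)`. -/
def tenF : ModuleCat.{u} R ⥤ ModuleCat.{u} S where
  obj M := ModuleCat.of S (BTen S R C M)
  map f := ModuleCat.ofHom (bmap S R C f.hom)
  map_id M := ModuleCat.hom_ext (bten_ext S R C (by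
    intro c m
    change bmap S R C (ModuleCat.Hom.hom (𝟙 M)) (btmul S R C _ c m) = btmul S R C _ c m
    rw [bmap_btmul]; rfl))
  map_comp f g := ModuleCat.hom_ext (bten_ext S R C (by
    intro c m
    change bmap S R C (ModuleCat.Hom.hom (f ≫ g)) (btmul S R C _ c m)
      = bmap S R C g.hom (bmap S R C f.hom (btmul S R C _ c m))
    rw [bmap_btmul, bmap_btmul, bmap_btmul]; rfl))

instance : (tenF S R C).Additive where
  map_add := by
    intro M N f g
    refine ModuleCat.hom_ext (bten_ext S R C fun c m => ?_)
    change bmap S R C (ModuleCat.Hom.hom (f + g)) (btmul S R C _ c m)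
      = bmap S R C f.hom (btmul S R C _ c m) + bmap S R C g.hom (btmul S R C _ c m)
    rw [bmap_btmul, bmap_btmul, bmap_btmul]
    change btmul S R C _ c (f.hom m + g.hom m) = _
    rw [btmul_add]

/-- `Tor^R_i(C, M)` as an object of `Mod(S)`, defined as the `i`-th left derived
functor of `C ⊗_R -` applied to `M`. -/
def TorC (M : Type u) [AddCommGroup M] [Module R M] (i : ℕ) : ModuleCat.{u} S :=
  ((tenF S R C).leftDerived i).obj (ModuleCat.of R M)

end TenF

section ExtPart

variable (S : Type u) [Ring S]

instance hasExtModuleCat : HasExt.{u+1} (ModuleCat.{u} S) :=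
  letI := HasDerivedCategory.standard (ModuleCat.{u} S)
  hasExt_of_hasDerivedCategory _

/-- `Ext^i_S(A, B)`. -/
def ExtGrp (A : Type u) [AddCommGroup A] [Module S A] (B : Type u) [AddCommGroup B] [Module S B]
    (i : ℕ) : Type (u+1) :=
  Abelian.Ext.{u+1} (ModuleCat.of S A) (ModuleCat.of S B) i

variable (A : Type u) [AddCommGroup A] [Module S A] (B : Type u) [AddCommGroup B] [Module S B]

instance (i : ℕ) : AddCommGroup (ExtGrp S A B i) :=
  inferInstanceAs (AddCommGroup (Abelian.Ext (ModuleCat.of S A) (ModuleCat.of S B) i))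

lemma mk₀_add' {X Y : ModuleCat.{u} S} (f g : X ⟶ Y) :
    Abelian.Ext.mk₀ (f + g) = Abelian.Ext.mk₀ f + Abelian.Ext.mk₀ g := by
  letI := HasDerivedCategory.standard (ModuleCat.{u} S)
  apply Abelian.Ext.ext
  rw [Abelian.Ext.add_hom, Abelian.Ext.mk₀_hom, Abelian.Ext.mk₀_hom, Abelian.Ext.mk₀_hom,
    Functor.map_add]
  simp [ShiftedHom.mk₀]

end ExtPart

section ExtModule

variable (S : Type u) [Ring S]
variable (A : Type u) [AddCommGroup A] [Module S A] (B : Type u) [AddCommGroup B] [Module S B]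
variable (T : Type u) [Ring T] [Module T B] [SMulCommClass S T B]

/-- The `S`-linear endomorphism of `B` given by the action of `t : T`. -/
def tsLin (t : T) : B →ₗ[S] B where
  toFun := fun b => t • b
  map_add' := smul_add t
  map_smul' := fun s b => (smul_comm s t b).symm

/-- `tsLin` as a morphism in `ModuleCat S`. -/
def tsMap (t : T) : ModuleCat.of S B ⟶ ModuleCat.of S B := ModuleCat.ofHom (tsLin S B T t)

/-- The `T`-module structure on `Ext^i_S(A,B)` induced by a commuting
`T`-action on `B`. -/
instance extModule (i : ℕ) : Module T (ExtGrp S A B i) where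
  smul t e := Abelian.Ext.comp e (Abelian.Ext.mk₀ (tsMap S B T t)) (add_zero i)
  one_smul e := by
    show Abelian.Ext.comp _ _ _ = _
    have h : tsMap S B T (1 : T) = 𝟙 (ModuleCat.of S B) := by
      apply ModuleCat.hom_ext
      show tsLin S B T 1 = (LinearMap.id : B →ₗ[S] B)
      ext b; simp [tsLin]
    rw [h]
    exact Abelian.Ext.comp_mk₀_id e
  mul_smul t₁ t₂ e := by
    show e.comp (Abelian.Ext.mk₀ (tsMap S B T (t₁ * t₂))) (add_zero i) =
      (e.comp (Abelian.Ext.mk₀ (tsMap S B T t₂)) (add_zero i)).comp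
        (Abelian.Ext.mk₀ (tsMap S B T t₁)) (add_zero i)
    rw [Abelian.Ext.comp_assoc_of_third_deg_zero (α := e), Abelian.Ext.mk₀_comp_mk₀]
    have h : tsMap S B T (t₁ * t₂) = tsMap S B T t₂ ≫ tsMap S B T t₁ := by
      apply ModuleCat.hom_ext
      show tsLin S B T (t₁ * t₂) = (tsLin S B T t₁).comp (tsLin S B T t₂)
      ext b; simp [tsLin, mul_smul]
    rw [h]
  smul_zero t := by
    show Abelian.Ext.comp _ _ _ = _
    erw [Abelian.Ext.zero_comp]; rfl
  smul_add t e₁ e₂ := by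
    show Abelian.Ext.comp _ _ _ = _
    erw [Abelian.Ext.add_comp]; rfl
  add_smul t₁ t₂ e := by
    show Abelian.Ext.comp _ _ _ = _
    have h : tsMap S B T (t₁ + t₂) = tsMap S B T t₁ + tsMap S B T t₂ := by
      apply ModuleCat.hom_ext
      ext b; simp [tsMap, tsLin, add_smul]
    rw [h, mk₀_add']; erw [Abelian.Ext.comp_add]; rfl
  zero_smul e := by
    show Abelian.Ext.comp _ _ _ = _
    have h : tsMap S B T (0 : T) = 0 := by
      apply ModuleCat.hom_ext
      show tsLin S B T (0 : T) = 0
      ext b; simp [tsLin]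
    rw [h, Abelian.Ext.mk₀_zero]; erw [Abelian.Ext.comp_zero]; rfl

end ExtModule

section HomC

variable (S : Type u) [Ring S] (R : Type u) [Ring R]
variable (C : Type u) [AddCommGroup C] [Module S C] [Module Rᵐᵒᵖ C] [SMulCommClass S Rᵐᵒᵖ C]
variable (N : Type u) [AddCommGroup N] [Module S N]

/-- Right multiplication by `r` on `C`, as an `S`-linear map. -/
def rsm (r : R) : C →ₗ[S] C where
  toFun := fun c => op r • c
  map_add' := smul_add (op r)
  map_smul' := fun s c => (smul_comm s (op r) c).symm

end HomC

/-- `Hom_S(C, N)` as a left `R`-module (the action comes from the right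
`R`-module structure on `C`). -/
def HomC (S : Type u) [Ring S] (R : Type u) [Ring R]
    (C : Type u) [AddCommGroup C] [Module S C] [Module Rᵐᵒᵖ C] [SMulCommClass S Rᵐᵒᵖ C]
    (N : Type u) [AddCommGroup N] [Module S N] : Type u := C →ₗ[S] N

section HomC2

variable (S : Type u) [Ring S] (R : Type u) [Ring R]
variable (C : Type u) [AddCommGroup C] [Module S C] [Module Rᵐᵒᵖ C] [SMulCommClass S Rᵐᵒᵖ C]
variable (N : Type u) [AddCommGroup N] [Module S N]

instance : AddCommGroup (HomC S R C N) := inferInstanceAs (AddCommGroup (C →ₗ[S] N))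

instance : Module R (HomC S R C N) where
  smul r φ := (show C →ₗ[S] N from φ).comp (rsm S R C r)
  one_smul φ := by
    show (show C →ₗ[S] N from φ).comp (rsm S R C 1) = φ
    ext c; simp [rsm]; rfl
  mul_smul r₁ r₂ φ := by
    show (show C →ₗ[S] N from φ).comp (rsm S R C (r₁ * r₂))
      = ((show C →ₗ[S] N from φ).comp (rsm S R C r₂)).comp (rsm S R C r₁)
    ext c
    show (show C →ₗ[S] N from φ) (op (r₁ * r₂) • c)
      = (show C →ₗ[S] N from φ) (op r₂ • op r₁ • c)
    rw [← mul_smul, ← MulOpposite.op_mul]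
  smul_zero r := by
    show (0 : C →ₗ[S] N).comp (rsm S R C r) = 0
    ext c; simp
  smul_add r φ ψ := by
    show ((show C →ₗ[S] N from φ) + (show C →ₗ[S] N from ψ)).comp (rsm S R C r)
      = (show C →ₗ[S] N from φ).comp (rsm S R C r)
        + (show C →ₗ[S] N from ψ).comp (rsm S R C r)
    ext c; simp; rfl
  add_smul r₁ r₂ φ := by
    show (show C →ₗ[S] N from φ).comp (rsm S R C (r₁ + r₂))
      = (show C →ₗ[S] N from φ).comp (rsm S R C r₁)
        + (show C →ₗ[S] N from φ).comp (rsm S R C r₂)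
    ext c
    show (show C →ₗ[S] N from φ) (op (r₁ + r₂) • c)
      = (show C →ₗ[S] N from φ) (op r₁ • c) + (show C →ₗ[S] N from φ) (op r₂ • c)
    rw [MulOpposite.op_add, add_smul, map_add]
  zero_smul φ := by
    show (show C →ₗ[S] N from φ).comp (rsm S R C 0) = 0
    ext c
    show (show C →ₗ[S] N from φ) (op (0 : R) • c) = 0
    simp; exact LinearMap.map_zero φ

/-- Application of an element of `HomC S R C N`. -/
def HomC.app (φ : HomC S R C N) : C →ₗ[S] N := φ

end HomC2

section MuNu

variable (S : Type u) [Ring S] (R : Type u) [Ring R]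
variable (C : Type u) [AddCommGroup C] [Module S C] [Module Rᵐᵒᵖ C] [SMulCommClass S Rᵐᵒᵖ C]

/-- `Hom_S(C, f)` for an `S`-linear map `f`, as an `R`-linear map. -/
def homCMap {N N' : Type u} [AddCommGroup N] [Module S N] [AddCommGroup N'] [Module S N']
    (f : N →ₗ[S] N') : HomC S R C N →ₗ[R] HomC S R C N' where
  toFun φ := (f.comp (show C →ₗ[S] N from φ) : C →ₗ[S] N')
  map_add' φ ψ := by
    apply LinearMap.ext; intro c
    show f ((show C →ₗ[S] N from φ) c + (show C →ₗ[S] N from ψ) c)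
      = f ((show C →ₗ[S] N from φ) c) + f ((show C →ₗ[S] N from ψ) c)
    rw [map_add]
  map_smul' r φ := by
    show f.comp ((show C →ₗ[S] N from φ).comp (rsm S R C r))
      = (f.comp (show C →ₗ[S] N from φ)).comp (rsm S R C r)
    ext c; simp; rfl

/-- The unit `μ_M : M → Hom_S(C, C ⊗_R M)` of the adjunction. -/
def muMap (M : Type u) [AddCommGroup M] [Module R M] :
    M →ₗ[R] HomC S R C (BTen S R C M) where
  toFun m := (show C →ₗ[S] BTen S R C M from
    { toFun := fun c => btmul S R C M c m
      map_add' := fun c c' => by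
        show Submodule.Quotient.mk ((c + c') ⊗ₜ[ℤ] m) = (Submodule.Quotient.mk (c ⊗ₜ[ℤ] m))
          + (Submodule.Quotient.mk (c' ⊗ₜ[ℤ] m))
        rw [TensorProduct.add_tmul, Submodule.Quotient.mk_add]
      map_smul' := fun s c => by simpa using btmul_smul S R C s c m })
  map_add' m m' := by
    apply LinearMap.ext; intro c
    exact btmul_add S R C c m m'
  map_smul' r m := by
    apply LinearMap.ext; intro c
    exact (btmul_rel S R C r c m).symm

/-- The counit `ν_N : C ⊗_R Hom_S(C,N) → N` of the adjunction. -/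
def nuMap (N : Type u) [AddCommGroup N] [Module S N] :
    BTen S R C (HomC S R C N) →ₗ[S] N := by
  refine Submodule.liftQ _ ?_ ?_
  · exact
    { toFun := (TensorProduct.lift
        { toFun := fun c =>
            { toFun := fun φ => (show C →ₗ[S] N from φ) c
              map_add' := fun φ ψ => rfl
              map_smul' := fun n φ => by
                show (show C →ₗ[S] N from n • φ) c = n • (show C →ₗ[S] N from φ) c
                simp; rfl }
          map_add' := fun c c' => by
            ext φ; exact map_add (show C →ₗ[S] N from φ) c c'
          map_smul' := fun n c => by
            ext φ; exact map_zsmul (show C →ₗ[S] N from φ) n c } :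
          TensorProduct ℤ C (HomC S R C N) →ₗ[ℤ] N)
      map_add' := fun x y => map_add _ x y
      map_smul' := fun s x => by
        induction x using TensorProduct.induction_on with
        | zero => simp
        | tmul c φ => simp [TensorProduct.smul_tmul']; exact LinearMap.map_smul φ s c
        | add x y hx hy => simp_all [smul_add] }
  · rw [brel, Submodule.span_le]
    rintro x ⟨c, r, φ, rfl⟩
    simp only [SetLike.mem_coe, LinearMap.mem_ker, map_sub, LinearMap.coe_mk, AddHom.coe_mk]
    show TensorProduct.lift _ ((op r • c) ⊗ₜ[ℤ] φ) - TensorProduct.lift _ (c ⊗ₜ[ℤ] (r • φ)) = 0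
    rw [TensorProduct.lift.tmul, TensorProduct.lift.tmul]
    show (show C →ₗ[S] N from φ) (op r • c)
      - ((show C →ₗ[S] N from φ).comp (rsm S R C r)) c = 0
    simp [rsm]; exact sub_self _

end MuNu

section BMapL

variable (R : Type u) [Ring R]
variable {A B : Type u} [AddCommGroup A] [Module Rᵐᵒᵖ A] [AddCommGroup B] [Module Rᵐᵒᵖ B]
variable (M : Type u) [AddCommGroup M] [Module R M]

/-- The additive map `A ⊗_R M → B ⊗_R M` induced by a right `R`-linear map `g : A → B`. -/
def bmapL (g : A →ₗ[Rᵐᵒᵖ] B) : BTen ℤ R A M →ₗ[ℤ] BTen ℤ R B M :=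
  Submodule.mapQ _ _ (LinearMap.rTensor M g.toAddMonoidHom.toIntLinearMap) (by
    rw [brel, Submodule.span_le]
    rintro x ⟨a, r, m, rfl⟩
    simp only [SetLike.mem_coe, Submodule.mem_comap, map_sub]
    have h1 : LinearMap.rTensor M g.toAddMonoidHom.toIntLinearMap ((op r • a) ⊗ₜ[ℤ] m)
        = (op r • g a) ⊗ₜ[ℤ] m := by
      simp
    have h2 : LinearMap.rTensor M g.toAddMonoidHom.toIntLinearMap (a ⊗ₜ[ℤ] (r • m))
        = g a ⊗ₜ[ℤ] (r • m) := by
      simp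
    rw [h1, h2]
    exact Submodule.subset_span ⟨g a, r, m, rfl⟩)

end BMapL

section FlatDef

variable (R : Type u) [Ring R]

/-- A left `R`-module `F` is flat if `- ⊗_R F` preserves injectivity of maps of
right `R`-modules. -/
def FlatModule (F : Type u) [AddCommGroup F] [Module R F] : Prop :=
  ∀ (A B : ModuleCat.{u} Rᵐᵒᵖ) (g : A →ₗ[Rᵐᵒᵖ] B), Function.Injective g →
    Function.Injective (bmapL R F g)

end FlatDef

section Classes

variable (S : Type u) [Ring S] (R : Type u) [Ring R]
variable (C : Type u) [AddCommGroup C] [Module S C] [Module Rᵐᵒᵖ C] [SMulCommClass S Rᵐᵒᵖ C]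

/-- `A` admits a degreewise finite projective resolution over `S`. -/
def HasDegreewiseFiniteProjectiveResolution (A : Type u) [AddCommGroup A] [Module S A] : Prop :=
  ∃ P : CategoryTheory.ProjectiveResolution (ModuleCat.of S A),
    ∀ n, Module.Finite S (P.complex.X n)

/-- `C` is a semidualizing `(S,R)`-bimodule. -/
def IsSemidualizing : Prop :=
  HasDegreewiseFiniteProjectiveResolution S C ∧
  HasDegreewiseFiniteProjectiveResolution Rᵐᵒᵖ C ∧
  Function.Bijective (fun s : S =>
    ({ toFun := fun c : C => s • c
       map_add' := smul_add s
       map_smul' := fun r c => smul_comm s r c } : C →ₗ[Rᵐᵒᵖ] C)) ∧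
  Function.Bijective (rsm S R C : R → (C →ₗ[S] C)) ∧
  (∀ i : ℕ, 1 ≤ i → Subsingleton (ExtGrp S C C i)) ∧
  (∀ i : ℕ, 1 ≤ i → Subsingleton (ExtGrp Rᵐᵒᵖ C C i))

/-- `C` is a faithfully semidualizing `(S,R)`-bimodule. -/
def IsFaithfullySemidualizing : Prop :=
  IsSemidualizing S R C ∧
  (∀ N : ModuleCat.{u} S, (∀ φ : C →ₗ[S] N, φ = 0) → Subsingleton N) ∧
  (∀ M : ModuleCat.{u} Rᵐᵒᵖ, (∀ φ : C →ₗ[Rᵐᵒᵖ] M, φ = 0) → Subsingleton M)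

/-- Membership in the Auslander class `A_C(R)`. -/
def MemAuslander (M : Type u) [AddCommGroup M] [Module R M] : Prop :=
  (∀ i : ℕ, 1 ≤ i → Subsingleton (TorC S R C M i)) ∧
  (∀ i : ℕ, 1 ≤ i → Subsingleton (ExtGrp S C (BTen S R C M) i)) ∧
  Function.Bijective (muMap S R C M)

/-- Membership in the Bass class `B_C(S)`. -/
def MemBass (N : Type u) [AddCommGroup N] [Module S N] : Prop :=
  (∀ i : ℕ, 1 ≤ i → Subsingleton (ExtGrp S C N i)) ∧
  (∀ i : ℕ, 1 ≤ i → Subsingleton (TorC S R C (HomC S R C N) i)) ∧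
  Function.Bijective (nuMap S R C N)

/-- `V` is a `C`-flat `S`-module, i.e. `V ≅ C ⊗_R F` with `F` a flat `R`-module. -/
def IsCFlat (V : Type u) [AddCommGroup V] [Module S V] : Prop :=
  ∃ F : ModuleCat.{u} R, FlatModule R F ∧ Nonempty (V ≃ₗ[S] BTen S R C F)

/-- `V` is a `C`-projective `S`-module. -/
def IsCProjective (V : Type u) [AddCommGroup V] [Module S V] : Prop :=
  ∃ P : ModuleCat.{u} R, Module.Projective R P ∧ Nonempty (V ≃ₗ[S] BTen S R C P)

/-- `U` is a `C`-injective `R`-module, i.e. `U ≅ Hom_S(C, I)` with `I` an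
injective `S`-module. -/
def IsCInjective (U : Type u) [AddCommGroup U] [Module R U] : Prop :=
  ∃ I : ModuleCat.{u} S, Module.Injective S I ∧ Nonempty (U ≃ₗ[R] HomC S R C I)

end Classes


section FoxbyAux

variable (S : Type u) [Ring S] (R : Type u) [Ring R]
variable (C : Type u) [AddCommGroup C] [Module S C] [Module Rᵐᵒᵖ C] [SMulCommClass S Rᵐᵒᵖ C]

lemma nuMap_btmul (N : Type u) [AddCommGroup N] [Module S N] (c : C) (φ : HomC S R C N) :
    nuMap S R C N (btmul S R C (HomC S R C N) c φ) = HomC.app S R C N φ c := rfl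

lemma bmap_leftInv {M M' : Type u} [AddCommGroup M] [Module R M] [AddCommGroup M'] [Module R M']
    (f : M →ₗ[R] M') (g : M' →ₗ[R] M) (h : ∀ m, g (f m) = m) (x : BTen S R C M) :
    bmap S R C g (bmap S R C f x) = x := by
  have he : (bmap S R C g).comp (bmap S R C f)
      = (LinearMap.id : BTen S R C M →ₗ[S] BTen S R C M) :=
    bten_ext S R C (fun c m => by simp [h])
  simpa using LinearMap.congr_fun he x

lemma bmap_bijective {M M' : Type u} [AddCommGroup M] [Module R M] [AddCommGroup M'] [Module R M']
    (f : M →ₗ[R] M') (hf : Function.Bijective f) : Function.Bijective (bmap S R C f) := by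
  let e := LinearEquiv.ofBijective f hf
  refine ⟨fun x y hxy => ?_, fun y => ⟨bmap S R C e.symm.toLinearMap y, ?_⟩⟩
  · have h1 := bmap_leftInv S R C f e.symm.toLinearMap (fun m => e.symm_apply_apply m) x
    have h2 := bmap_leftInv S R C f e.symm.toLinearMap (fun m => e.symm_apply_apply m) y
    rw [← h1, ← h2, hxy]
  · exact bmap_leftInv S R C e.symm.toLinearMap f (fun m => e.apply_symm_apply m) y

lemma nu_bmap_mu (M : Type u) [AddCommGroup M] [Module R M] (x : BTen S R C M) :
    nuMap S R C (BTen S R C M) (bmap S R C (muMap S R C M) x) = x := by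
  have he : (nuMap S R C (BTen S R C M)).comp (bmap S R C (muMap S R C M))
      = (LinearMap.id : BTen S R C M →ₗ[S] BTen S R C M) :=
    bten_ext S R C (fun c m => by
      simp only [LinearMap.comp_apply, bmap_btmul, LinearMap.id_apply]
      rfl)
  simpa using LinearMap.congr_fun he x

lemma homCMap_leftInv {N N' : Type u} [AddCommGroup N] [Module S N] [AddCommGroup N'] [Module S N']
    (f : N →ₗ[S] N') (g : N' →ₗ[S] N) (h : ∀ n, g (f n) = n) (φ : HomC S R C N) :
    homCMap S R C g (homCMap S R C f φ) = φ := by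
  show (g.comp (f.comp (φ : C →ₗ[S] N)) : C →ₗ[S] N) = φ
  ext c
  exact h _

lemma homCMap_bijective {N N' : Type u} [AddCommGroup N] [Module S N] [AddCommGroup N']
    [Module S N'] (f : N →ₗ[S] N') (hf : Function.Bijective f) :
    Function.Bijective (homCMap S R C f) := by
  let e := LinearEquiv.ofBijective f hf
  refine ⟨fun x y hxy => ?_, fun y => ⟨homCMap S R C e.symm.toLinearMap y, ?_⟩⟩
  · have h1 := homCMap_leftInv S R C f e.symm.toLinearMap (fun n => e.symm_apply_apply n) x
    have h2 := homCMap_leftInv S R C f e.symm.toLinearMap (fun n => e.symm_apply_apply n) y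
    rw [← h1, ← h2, hxy]
  · exact homCMap_leftInv S R C e.symm.toLinearMap f (fun n => e.apply_symm_apply n) y

lemma homCMap_nu_mu (N : Type u) [AddCommGroup N] [Module S N] (φ : HomC S R C N) :
    homCMap S R C (nuMap S R C N) (muMap S R C (HomC S R C N) φ) = φ := by
  show ((nuMap S R C N).comp _ : C →ₗ[S] N) = φ
  ext c
  rfl

lemma ext_transfer (A B B' : Type u) [AddCommGroup A] [Module S A] [AddCommGroup B] [Module S B]
    [AddCommGroup B'] [Module S B'] (f : B →ₗ[S] B') (hf : Function.Bijective f) (i : ℕ)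
    (h : Subsingleton (ExtGrp S A B' i)) : Subsingleton (ExtGrp S A B i) := by
  let e := LinearEquiv.ofBijective f hf
  let f' : ModuleCat.of S B ⟶ ModuleCat.of S B' := ModuleCat.ofHom f
  let g' : ModuleCat.of S B' ⟶ ModuleCat.of S B := ModuleCat.ofHom e.symm.toLinearMap
  have hfg : f' ≫ g' = 𝟙 (ModuleCat.of S B) := ModuleCat.hom_ext <| LinearMap.ext fun b => e.symm_apply_apply b
  have key : ∀ z : ExtGrp S A B i,
      Abelian.Ext.comp (Abelian.Ext.comp z (Abelian.Ext.mk₀ f') (add_zero i))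
        (Abelian.Ext.mk₀ g') (add_zero i) = z := by
    intro z
    rw [Abelian.Ext.comp_assoc_of_third_deg_zero (α := z), Abelian.Ext.mk₀_comp_mk₀, hfg]
    exact Abelian.Ext.comp_mk₀_id z
  constructor
  intro x y
  have hxy : Abelian.Ext.comp x (Abelian.Ext.mk₀ f') (add_zero i)
      = Abelian.Ext.comp y (Abelian.Ext.mk₀ f') (add_zero i) := h.elim _ _
  rw [← key x, ← key y, hxy]

lemma tor_transfer (M M' : Type u) [AddCommGroup M] [Module R M] [AddCommGroup M'] [Module R M']
    (f : M →ₗ[R] M') (hf : Function.Bijective f) (i : ℕ)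
    (h : Subsingleton (TorC S R C M i)) : Subsingleton (TorC S R C M' i) := by
  let e := LinearEquiv.ofBijective f hf
  let F := (tenF S R C).leftDerived i
  let f' : ModuleCat.of R M ⟶ ModuleCat.of R M' := ModuleCat.ofHom f
  let g' : ModuleCat.of R M' ⟶ ModuleCat.of R M := ModuleCat.ofHom e.symm.toLinearMap
  have hgf : g' ≫ f' = 𝟙 (ModuleCat.of R M') := ModuleCat.hom_ext <| LinearMap.ext fun m' => e.apply_symm_apply m'
  have hcomp : F.map g' ≫ F.map f' = 𝟙 (F.obj (ModuleCat.of R M')) := by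
    rw [← F.map_comp, hgf, F.map_id]
  constructor
  intro x y
  have h1 : (F.map g').hom x = (F.map g').hom y := h.elim _ _
  have k : ∀ z, (F.map f').hom ((F.map g').hom z) = z := fun z =>
    LinearMap.congr_fun (congrArg ModuleCat.Hom.hom hcomp) z
  rw [← k x, ← k y, h1]

end FoxbyAux

/-- Foxby equivalence between the Auslander class `A_C(R)` and the Bass
class `B_C(S)`: `C ⊗_R -` and `Hom_S(C,-)` restrict to quasi-inverse equivalences,
the unit `μ` and counit `ν` being isomorphisms on these classes. -/
theorem foxby_equivalence_auslander_bass
    (S : Type) [Ring S] (R : Type) [Ring R]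
    (C : Type) [AddCommGroup C] [Module S C] [Module Rᵐᵒᵖ C] [SMulCommClass S Rᵐᵒᵖ C]
    (hC : IsSemidualizing S R C) :
    (∀ M : ModuleCat R, MemAuslander S R C (↥M) →
       MemBass S R C (BTen S R C (↥M)) ∧ Function.Bijective (muMap S R C (↥M))) ∧
    (∀ N : ModuleCat S, MemBass S R C (↥N) →
       MemAuslander S R C (HomC S R C (↥N)) ∧ Function.Bijective (nuMap S R C (↥N))) := by
  constructor
  · intro M hM
    obtain ⟨hTor, hExt, hmu⟩ := hM
    refine ⟨⟨hExt, ?_, ?_⟩, hmu⟩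
    · intro i hi
      exact tor_transfer S R C _ _ (muMap S R C (↥M)) hmu i (hTor i hi)
    · have hb := bmap_bijective S R C (muMap S R C (↥M)) hmu
      let be := LinearEquiv.ofBijective (bmap S R C (muMap S R C (↥M))) hb
      have hnu : ∀ a, nuMap S R C (BTen S R C (↥M)) a = be.symm a := fun a => by
        conv_lhs => rw [← be.apply_symm_apply a]
        exact nu_bmap_mu S R C (↥M) (be.symm a)
      have heq : ⇑(nuMap S R C (BTen S R C (↥M))) = ⇑be.symm := funext hnu
      exact heq.symm ▸ be.symm.bijective
  · intro N hN
    obtain ⟨hExt, hTor, hnu⟩ := hN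
    refine ⟨⟨hTor, ?_, ?_⟩, hnu⟩
    · intro i hi
      exact ext_transfer S C _ _ (nuMap S R C (↥N)) hnu i (hExt i hi)
    · have hh := homCMap_bijective S R C (nuMap S R C (↥N)) hnu
      let he := LinearEquiv.ofBijective (homCMap S R C (nuMap S R C (↥N))) hh
      have hmu : ∀ φ, muMap S R C (HomC S R C (↥N)) φ = he.symm φ := fun φ => by
        apply he.injective
        rw [he.apply_symm_apply]
        exact homCMap_nu_mu S R C (↥N) φ
      have heq : ⇑(muMap S R C (HomC S R C (↥N))) = ⇑he.symm := funext hmu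
      exact heq.symm ▸ he.symm.bijective
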